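/- arXiv:0908.3936 — 4 statements merged into one kernel-verified Lean document; each statement's English description precedes it below -/
import Mathlib

section
/- The Cauchy determinant identity: for x_1,...,x_N and y_1,...,y_N in a field with x_i ≠ y_j for all i,j, det[1/(x_i − y_j)]_{i,j=1}^N = (∏_{1≤i<j≤N} (x_i − x_j)(y_j − y_i)) / (∏_{i,j=1}^N (x_i − y_j)). -/
open Finset Matrix

private theorem cauchy_col_op {R : Type*} [CommRing R] {n : Type*} [DecidableEq n] [Fintype n]
    {A B : Matrix n n R} (c : n → R) (k : n) (hk : c k = 0)
    (h : ∀ i j, A i j = B i j + c j * B i k) : A.det = B.det := by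
  rw [← Matrix.det_transpose A, ← Matrix.det_transpose B]
  exact Matrix.det_eq_of_forall_row_eq_smul_add_const c k hk fun i j => h j i

private theorem cauchy_aux {F : Type*} [Field F] :
    ∀ (N : ℕ) (x y : Fin N → F), (∀ i j, x i ≠ y j) →
    (∏ i : Fin N, ∏ j : Fin N, (x i - y j)) *
        Matrix.det (Matrix.of fun i j : Fin N => (x i - y j)⁻¹) =
      ∏ i : Fin N, ∏ j ∈ Finset.Ioi i, (x i - x j) * (y j - y i) := by
  intro N
  induction N with
  | zero => intro x y h; simp
  | succ N ih =>
    intro x y h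
    have h' : ∀ i j, x i - y j ≠ 0 := fun i j => sub_ne_zero.mpr (h i j)
    -- Step A: subtract row 0 from every other row, then factor.
    set C : Matrix (Fin (N + 1)) (Fin (N + 1)) F :=
      Matrix.of (Fin.cons (fun _ => (1 : F)) fun i j => (x i.succ - y j)⁻¹) with hC
    have key : ∀ a b : F, a ≠ 0 → b ≠ 0 → a⁻¹ = (b - a) * (b⁻¹ * a⁻¹) + b⁻¹ := by
      intro a b ha hb; field_simp; ring
    have stepA : Matrix.det (Matrix.of fun i j : Fin (N + 1) => (x i - y j)⁻¹) =
        (∏ i : Fin N, (x 0 - x i.succ)) * ((∏ j : Fin (N + 1), (x 0 - y j)⁻¹) * C.det) := by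
      have e1 : Matrix.det (Matrix.of fun i j : Fin (N + 1) => (x i - y j)⁻¹) =
          Matrix.det (Matrix.of fun i j : Fin (N + 1) =>
            ((Fin.cons (1 : F) fun i => x 0 - x i.succ : Fin (N+1) → F) i) *
              ((Matrix.of fun i j : Fin (N + 1) => (x 0 - y j)⁻¹ * C i j) i j)) := by
        refine Matrix.det_eq_of_forall_row_eq_smul_add_const (Fin.cons 0 1) 0
          (Fin.cons_zero _ _) ?_
        intro i j
        refine Fin.cases ?_ (fun i => ?_) i
        · simp [hC]
        · simp only [Matrix.of_apply, hC, Fin.cons_succ, Fin.cons_zero, Pi.one_apply, one_mul]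
          conv_lhs => rw [key _ _ (h' i.succ j) (h' 0 j)]
          ring
      have e2 : Matrix.det (Matrix.of fun i j : Fin (N + 1) =>
            ((Fin.cons (1 : F) fun i => x 0 - x i.succ : Fin (N+1) → F) i) *
              ((Matrix.of fun i j : Fin (N + 1) => (x 0 - y j)⁻¹ * C i j) i j)) =
          (∏ i : Fin (N + 1), (Fin.cons (1 : F) fun i => x 0 - x i.succ : Fin (N+1) → F) i) *
            Matrix.det (Matrix.of fun i j : Fin (N + 1) => (x 0 - y j)⁻¹ * C i j) :=
        Matrix.det_mul_column _ _
      have e3 : Matrix.det (Matrix.of fun i j : Fin (N + 1) => (x 0 - y j)⁻¹ * C i j) =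
          (∏ j : Fin (N + 1), (x 0 - y j)⁻¹) * C.det := Matrix.det_mul_row _ _
      rw [e1, e2, e3, Fin.prod_univ_succ]
      simp
    -- Step B: subtract column 0 from every other column, then factor.
    set E : Matrix (Fin (N + 1)) (Fin (N + 1)) F :=
      Matrix.of (Fin.cons (Fin.cons 1 fun _ => (0 : F))
        fun i => Fin.cons 1 fun j => (x i.succ - y j.succ)⁻¹) with hE
    have stepB : C.det =
        (∏ i : Fin N, (x i.succ - y 0)⁻¹) * ((∏ j : Fin N, (y j.succ - y 0)) * E.det) := by
      have e1 : C.det = Matrix.det (Matrix.of fun i j : Fin (N + 1) =>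
          ((Fin.cons (1 : F) fun i => (x i.succ - y 0)⁻¹ : Fin (N + 1) → F) i) *
            ((Matrix.of fun i j : Fin (N + 1) =>
              ((Fin.cons (1 : F) fun j => y j.succ - y 0 : Fin (N + 1) → F) j) * E i j) i j)) := by
        refine cauchy_col_op (Fin.cons 0 1) 0 (Fin.cons_zero _ _) ?_
        intro i j
        refine Fin.cases ?_ (fun i => ?_) i <;> refine Fin.cases ?_ (fun j => ?_) j
        · simp [hC, hE]
        · simp [hC, hE]
        · simp [hC, hE]
        · simp only [hC, hE, Matrix.of_apply, Fin.cons_succ, Fin.cons_zero, Pi.one_apply]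
          conv_lhs => rw [key _ _ (h' i.succ j.succ) (h' i.succ 0)]
          ring
      have e2 : Matrix.det (Matrix.of fun i j : Fin (N + 1) =>
            ((Fin.cons (1 : F) fun i => (x i.succ - y 0)⁻¹ : Fin (N + 1) → F) i) *
              ((Matrix.of fun i j : Fin (N + 1) =>
                ((Fin.cons (1 : F) fun j => y j.succ - y 0 : Fin (N + 1) → F) j) * E i j) i j)) =
          (∏ i : Fin (N + 1), (Fin.cons (1 : F) fun i => (x i.succ - y 0)⁻¹ : Fin (N + 1) → F) i) *
            Matrix.det (Matrix.of fun i j : Fin (N + 1) =>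
              ((Fin.cons (1 : F) fun j => y j.succ - y 0 : Fin (N + 1) → F) j) * E i j) :=
        Matrix.det_mul_column _ _
      have e3 : Matrix.det (Matrix.of fun i j : Fin (N + 1) =>
            ((Fin.cons (1 : F) fun j => y j.succ - y 0 : Fin (N + 1) → F) j) * E i j) =
          (∏ j : Fin (N + 1), (Fin.cons (1 : F) fun j => y j.succ - y 0 : Fin (N + 1) → F) j) *
            E.det := Matrix.det_mul_row _ _
      rw [e1, e2, e3, Fin.prod_univ_succ, Fin.prod_univ_succ]
      simp
    -- determinant of E
    have hEdet : E.det = Matrix.det (Matrix.of fun i j : Fin N => (x i.succ - y j.succ)⁻¹) := by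
      rw [Matrix.det_succ_row_zero]
      simp only [hE, Matrix.of_apply, Fin.sum_univ_succ, Fin.cons_zero, Fin.cons_succ,
        Fin.val_zero, pow_zero, one_mul, mul_zero, zero_mul, Finset.sum_const_zero, add_zero,
        mul_one]
      congr 1
    have IH' := ih (fun i => x i.succ) (fun j => y j.succ) fun i j => h i.succ j.succ
    have hsplit : (∏ i : Fin (N + 1), ∏ j : Fin (N + 1), (x i - y j)) =
        (∏ j : Fin (N + 1), (x 0 - y j)) * ((∏ i : Fin N, (x i.succ - y 0)) *
          ∏ i : Fin N, ∏ j : Fin N, (x i.succ - y j.succ)) := by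
      rw [Fin.prod_univ_succ]
      congr 1
      rw [← Finset.prod_mul_distrib]
      exact Finset.prod_congr rfl fun i _ => by rw [Fin.prod_univ_succ]
    have hrhs : (∏ i : Fin (N + 1), ∏ j ∈ Finset.Ioi i, (x i - x j) * (y j - y i)) =
        (∏ j : Fin N, (x 0 - x j.succ) * (y j.succ - y 0)) *
          ∏ i : Fin N, ∏ j ∈ Finset.Ioi i, (x i.succ - x j.succ) * (y j.succ - y i.succ) := by
      rw [Fin.prod_univ_succ, Fin.prod_Ioi_zero]
      congr 1
      exact Finset.prod_congr rfl fun i _ => by rw [Fin.prod_Ioi_succ]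
    have hA : (∏ j : Fin (N + 1), (x 0 - y j)) ≠ 0 :=
      Finset.prod_ne_zero_iff.mpr fun j _ => h' 0 j
    have hB : (∏ i : Fin N, (x i.succ - y 0)) ≠ 0 :=
      Finset.prod_ne_zero_iff.mpr fun i _ => h' i.succ 0
    rw [stepA, stepB, hEdet, hsplit, hrhs, Finset.prod_inv_distrib, Finset.prod_inv_distrib]
    have expand : (∏ j : Fin (N + 1), (x 0 - y j)) * ((∏ i : Fin N, (x i.succ - y 0)) *
          ∏ i : Fin N, ∏ j : Fin N, (x i.succ - y j.succ)) *
        ((∏ i : Fin N, (x 0 - x i.succ)) * ((∏ j : Fin (N + 1), (x 0 - y j))⁻¹ *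
          ((∏ i : Fin N, (x i.succ - y 0))⁻¹ * ((∏ j : Fin N, (y j.succ - y 0)) *
            Matrix.det (Matrix.of fun i j : Fin N => (x i.succ - y j.succ)⁻¹))))) =
        ((∏ j : Fin (N + 1), (x 0 - y j)) * (∏ j : Fin (N + 1), (x 0 - y j))⁻¹) *
          (((∏ i : Fin N, (x i.succ - y 0)) * (∏ i : Fin N, (x i.succ - y 0))⁻¹) *
            (((∏ i : Fin N, (x 0 - x i.succ)) * ∏ j : Fin N, (y j.succ - y 0)) *
              ((∏ i : Fin N, ∏ j : Fin N, (x i.succ - y j.succ)) *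
                Matrix.det (Matrix.of fun i j : Fin N => (x i.succ - y j.succ)⁻¹)))) := by
      ring
    rw [expand, mul_inv_cancel₀ hA, mul_inv_cancel₀ hB, one_mul, one_mul, IH',
      ← Finset.prod_mul_distrib]

/-- The Cauchy determinant identity: for `x_1,…,x_N` and `y_1,…,y_N` in a field with
`x_i ≠ y_j` for all `i, j`,
`det[1/(x_i − y_j)] = (∏_{i<j} (x_i − x_j)(y_j − y_i)) / (∏_{i,j} (x_i − y_j))`. -/
theorem stmt6 {F : Type*} [Field F] (N : ℕ) (x y : Fin N → F)
    (h : ∀ i j, x i ≠ y j) :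
    Matrix.det (Matrix.of fun i j : Fin N => (x i - y j)⁻¹) =
      (∏ i : Fin N, ∏ j ∈ Finset.Ioi i, (x i - x j) * (y j - y i)) /
        ∏ i : Fin N, ∏ j : Fin N, (x i - y j) := by
  have hD : (∏ i : Fin N, ∏ j : Fin N, (x i - y j)) ≠ 0 :=
    Finset.prod_ne_zero_iff.mpr fun i _ =>
      Finset.prod_ne_zero_iff.mpr fun j _ => sub_ne_zero.mpr (h i j)
  rw [eq_div_iff hD, mul_comm]
  exact cauchy_aux N x y h
end

section
/- Jacobi's bilinear determinant identity (Desnanot–Jacobi / Dodgson condensation): for an n×n matrix A over a commutative ring with determinant D, let D[j;k] denote the minor deleting row j and column k, and D[j₁,j₂;k₁,k₂] the minor deleting rows j₁,j₂ and columns k₁,k₂. Then D[n−1;n−1]·D[n;n] − D[n−1;n]·D[n;n−1] = D[n−1,n;n−1,n]·D. -/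
/-!
Replace the last two columns of the identity by the corresponding columns of `adj A`; since
`A * adj A = det A • 1`, multiplying `A` by this matrix gives a block lower triangular matrix with
diagonal blocks `A₁₁` and `det A • 1`. Taking determinants,
`det A * det (adj A)₂₂ = det A₁₁ * (det A) ^ 2`. The factor `det A` cancels for the generic matrix
over `ℤ[xᵢⱼ]`, hence everywhere by specialisation. Finally, the entries of `adj A` are signed
complementary minors, and the signs cancel in the `2 × 2` determinant of `(adj A)₂₂`.
-/

open Matrix

namespace Matrix

variable {m n R : Type*} [Fintype m] [Fintype n] [DecidableEq m] [DecidableEq n] [CommRing R]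

theorem mul_fromBlocks_toBlocks_adjugate (A : Matrix (m ⊕ n) (m ⊕ n) R) :
    A * fromBlocks 1 A.adjugate.toBlocks₁₂ 0 A.adjugate.toBlocks₂₂ =
      fromBlocks A.toBlocks₁₁ 0 A.toBlocks₂₁ (A.det • 1) := by
  set B := A.adjugate
  have key : fromBlocks A.toBlocks₁₁ A.toBlocks₁₂ A.toBlocks₂₁ A.toBlocks₂₂ *
      fromBlocks B.toBlocks₁₁ B.toBlocks₁₂ B.toBlocks₂₁ B.toBlocks₂₂ =
      fromBlocks (A.det • 1) 0 0 (A.det • 1) := by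
    rw [fromBlocks_toBlocks, fromBlocks_toBlocks, mul_adjugate, ← fromBlocks_one, fromBlocks_smul,
      smul_zero, smul_zero]
  rw [fromBlocks_multiply, fromBlocks_inj] at key
  conv_lhs => rw [← fromBlocks_toBlocks A]
  rw [fromBlocks_multiply, key.2.1, key.2.2.2]
  simp

theorem det_mul_det_toBlocks₂₂_adjugate (A : Matrix (m ⊕ n) (m ⊕ n) R) :
    A.det * A.adjugate.toBlocks₂₂.det = A.toBlocks₁₁.det * A.det ^ Fintype.card n := by
  calc A.det * A.adjugate.toBlocks₂₂.det
      = (A * fromBlocks 1 A.adjugate.toBlocks₁₂ 0 A.adjugate.toBlocks₂₂).det := by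
        rw [det_mul, det_fromBlocks_zero₂₁, det_one, one_mul]
    _ = A.toBlocks₁₁.det * A.det ^ Fintype.card n := by
        rw [mul_fromBlocks_toBlocks_adjugate, det_fromBlocks_zero₁₂, det_smul, det_one, mul_one]

/-- Jacobi's complementary minor theorem, for a principal block. -/
theorem det_toBlocks₂₂_adjugate [Nonempty n] (A : Matrix (m ⊕ n) (m ⊕ n) R) :
    A.adjugate.toBlocks₂₂.det = A.toBlocks₁₁.det * A.det ^ (Fintype.card n - 1) := by
  let X := mvPolynomialX (m ⊕ n) (m ⊕ n) ℤ
  suffices X.adjugate.toBlocks₂₂.det = X.toBlocks₁₁.det * X.det ^ (Fintype.card n - 1) by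
    let f := MvPolynomial.eval₂Hom (Int.castRingHom R) fun p : (m ⊕ n) × (m ⊕ n) => A p.1 p.2
    have hX : f.mapMatrix X = A := mvPolynomialX_map_eval₂ _ A
    have h := congrArg f this
    rw [map_mul, map_pow, RingHom.map_det, RingHom.map_det, RingHom.map_det] at h
    rw [← hX, ← RingHom.map_adjugate]
    exact h
  apply mul_left_cancel₀ (det_mvPolynomialX_ne_zero (m ⊕ n) ℤ)
  rw [det_mul_det_toBlocks₂₂_adjugate, mul_left_comm, ← pow_succ',
    Nat.sub_add_cancel Fintype.card_pos]

theorem adjugate_mul_adjugate_sub_adjugate_mul_adjugate {k : ℕ}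
    (A : Matrix (Fin (k + 1)) (Fin (k + 1)) R) (i j : Fin (k + 1)) :
    A.adjugate i i * A.adjugate j j - A.adjugate i j * A.adjugate j i =
      (A.submatrix i.succAbove i.succAbove).det * (A.submatrix j.succAbove j.succAbove).det -
        (A.submatrix i.succAbove j.succAbove).det * (A.submatrix j.succAbove i.succAbove).det := by
  have hsq : ((-1 : R) ^ (i + j : ℕ)) * (-1) ^ (i + j : ℕ) = 1 := by
    rw [← mul_pow, neg_one_mul, neg_neg, one_pow]
  simp only [adjugate_fin_succ_eq_det_submatrix, Even.add_self, Even.neg_one_pow, one_mul,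
    add_comm (j : ℕ)]
  rw [mul_mul_mul_comm, hsq, one_mul]
  ring

end Matrix

/-- The paper's `n × n` matrix is `(n + 2) × (n + 2)` here, with 0-based indices: its rows and
columns `n − 1` and `n` are `⟨n, _⟩` and `Fin.last (n + 1)`, deleted by `Fin.succAbove ⟨n, _⟩`
and `Fin.castSucc`. -/
theorem stmt8 {R : Type*} [CommRing R] (n : ℕ) (A : Matrix (Fin (n + 2)) (Fin (n + 2)) R) :
    (A.submatrix (Fin.succAbove ⟨n, by omega⟩) (Fin.succAbove ⟨n, by omega⟩)).det *
        (A.submatrix Fin.castSucc Fin.castSucc).det -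
      (A.submatrix (Fin.succAbove ⟨n, by omega⟩) Fin.castSucc).det *
        (A.submatrix Fin.castSucc (Fin.succAbove ⟨n, by omega⟩)).det =
      (A.submatrix (fun i : Fin n => i.castSucc.castSucc)
          (fun i : Fin n => i.castSucc.castSucc)).det * A.det := by
  set p : Fin (n + 2) := ⟨n, by omega⟩
  let e : Fin n ⊕ Fin 2 ≃ Fin (n + 2) := finSumFinEquiv
  calc _ = A.adjugate p p * A.adjugate (Fin.last _) (Fin.last _) -
        A.adjugate p (Fin.last _) * A.adjugate (Fin.last _) p := by
        rw [adjugate_mul_adjugate_sub_adjugate_mul_adjugate, Fin.succAbove_last,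
          mul_comm (det _)]
    _ = (A.adjugate.submatrix e e).toBlocks₂₂.det := by
        rw [det_fin_two]
        rfl
    _ = _ := by
        rw [← adjugate_submatrix_equiv_self, det_toBlocks₂₂_adjugate, det_submatrix_equiv_self,
          Fintype.card_fin, Nat.add_one_sub_one, pow_one]
        rfl
end

section
/- Generalized cofactor identity: if A is an n×n matrix with determinant D and Δ_{jk} denotes the (j,k) cofactor, then for any 0 ≤ r ≤ n, det[(Δ_{r+i, r+j})_{i,j=1}^{n−r}] = det[(a_{ij})_{i,j=1}^{r}] · D^{n−r−1}. -/
open Matrix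

/-- Key block identity: `det B * det(adj B)₂₂ = det B₁₁ * det B ^ s`. -/
lemma jacobi_aux {R : Type*} [CommRing R] {r s : ℕ}
    (B : Matrix (Fin r ⊕ Fin s) (Fin r ⊕ Fin s) R) :
    B.det * Matrix.det (Matrix.of fun i j : Fin s => B.adjugate (.inr i) (.inr j)) =
      Matrix.det (Matrix.of fun i j : Fin r => B (.inl i) (.inl j)) * B.det ^ s := by
  set M : Matrix (Fin r ⊕ Fin s) (Fin r ⊕ Fin s) R :=
    Matrix.fromBlocks 1 (Matrix.of fun i j => B.adjugate (.inl i) (.inr j)) 0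
      (Matrix.of fun i j => B.adjugate (.inr i) (.inr j)) with hM
  have hBM : B * M = Matrix.fromBlocks (Matrix.of fun i j : Fin r => B (.inl i) (.inl j)) 0
      (Matrix.of fun i j => B (.inr i) (.inl j)) (B.det • 1) := by
    have hadj : B * B.adjugate = B.det • 1 := Matrix.mul_adjugate B
    ext i j
    rcases j with j | j
    · rcases i with i | i <;>
        simp [hM, Matrix.mul_apply, Fintype.sum_sum_type, Matrix.one_apply, mul_ite,
          Finset.sum_ite_eq']
    · have h2 : (B * B.adjugate) i (Sum.inr j) = (B.det • (1 : Matrix (Fin r ⊕ Fin s) (Fin r ⊕ Fin s) R)) i (Sum.inr j) := by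
        rw [hadj]
      rw [Matrix.mul_apply] at h2
      rcases i with i | i <;>
        simpa [hM, Matrix.mul_apply, Fintype.sum_sum_type, Matrix.one_apply] using h2
  have hdM : M.det = (Matrix.of fun i j : Fin s => B.adjugate (.inr i) (.inr j)).det := by
    rw [hM, Matrix.det_fromBlocks_zero₂₁, Matrix.det_one, one_mul]
  have hdet := congrArg Matrix.det hBM
  rw [Matrix.det_mul, hdM, Matrix.det_fromBlocks_zero₁₂, Matrix.det_smul, Matrix.det_one,
    mul_one, Fintype.card_fin] at hdet
  rw [hdet, mul_comm]

/-- Jacobi's identity over any commutative ring, obtained from the generic case. -/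
lemma jacobi_main {R : Type*} [CommRing R] {r s : ℕ} (hs : 1 ≤ s)
    (B : Matrix (Fin r ⊕ Fin s) (Fin r ⊕ Fin s) R) :
    Matrix.det (Matrix.of fun i j : Fin s => B.adjugate (.inr i) (.inr j)) =
      Matrix.det (Matrix.of fun i j : Fin r => B (.inl i) (.inl j)) * B.det ^ (s - 1) := by
  -- generic case
  have hgen : ∀ (X : Matrix (Fin r ⊕ Fin s) (Fin r ⊕ Fin s)
      (MvPolynomial ((Fin r ⊕ Fin s) × (Fin r ⊕ Fin s)) ℤ)), X.det ≠ 0 →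
      Matrix.det (Matrix.of fun i j : Fin s => X.adjugate (.inr i) (.inr j)) =
        Matrix.det (Matrix.of fun i j : Fin r => X (.inl i) (.inl j)) * X.det ^ (s - 1) := by
    intro X hX
    have h1 := jacobi_aux X
    have hp : X.det ^ s = X.det ^ (s - 1) * X.det := by
      rw [← pow_succ]; congr 1; omega
    rw [hp] at h1
    apply mul_left_cancel₀ hX
    rw [h1]; ring
  set X := Matrix.mvPolynomialX (Fin r ⊕ Fin s) (Fin r ⊕ Fin s) ℤ with hX
  have hXd : X.det ≠ 0 := Matrix.det_mvPolynomialX_ne_zero _ ℤ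
  have h := hgen X hXd
  set φ : MvPolynomial ((Fin r ⊕ Fin s) × (Fin r ⊕ Fin s)) ℤ →+* R :=
    (MvPolynomial.eval fun p => B p.1 p.2).comp
      (MvPolynomial.map (Int.castRingHom R)) with hφ
  have hφX : φ.mapMatrix X = B := by
    ext i j
    simp [hφ, hX, MvPolynomial.eval_map]
  have := congrArg φ h
  rw [_root_.map_mul, map_pow] at this
  have e1 : φ ((Matrix.of fun i j : Fin s => X.adjugate (.inr i) (.inr j)).det)
      = (Matrix.of fun i j : Fin s => B.adjugate (.inr i) (.inr j)).det := by
    rw [RingHom.map_det]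
    congr 1
    ext i j
    have : φ.mapMatrix X.adjugate = B.adjugate := by rw [RingHom.map_adjugate, hφX]
    calc φ (X.adjugate (.inr i) (.inr j)) = (φ.mapMatrix X.adjugate) (.inr i) (.inr j) := rfl
      _ = B.adjugate (.inr i) (.inr j) := by rw [this]
  have e2 : φ ((Matrix.of fun i j : Fin r => X (.inl i) (.inl j)).det)
      = (Matrix.of fun i j : Fin r => B (.inl i) (.inl j)).det := by
    rw [RingHom.map_det]
    congr 1
    ext i j
    calc φ (X (.inl i) (.inl j)) = (φ.mapMatrix X) (.inl i) (.inl j) := rfl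
      _ = B (.inl i) (.inl j) := by rw [hφX]
  have e3 : φ X.det = B.det := by rw [RingHom.map_det, hφX]
  rw [e1, e2, e3] at this
  exact this


/-- Generalized cofactor identity: for an `(m+1)×(m+1)` matrix `A` (so `n = m+1`) with
determinant `D = det A`, cofactors `Δ_{jk} = (−1)^{j+k}·det(A` with row `j`, column `k`
deleted`)`, and `1 ≤ r ≤ n − 1 = m`:
`det[(Δ_{r+i, r+j})_{i,j=1}^{n−r}] = det[(a_{ij})_{i,j=1}^{r}] · D^{n−r−1}`. -/
theorem stmt9 {R : Type*} [CommRing R] (m : ℕ) (A : Matrix (Fin (m + 1)) (Fin (m + 1)) R)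
    (r : ℕ) (hr1 : 1 ≤ r) (hr2 : r ≤ m) :
    Matrix.det (Matrix.of fun i j : Fin (m + 1 - r) =>
        (-1 : R) ^ ((r + i.1) + (r + j.1)) *
          Matrix.det (A.submatrix
            (Fin.succAbove ⟨r + i.1, by have := i.2; omega⟩)
            (Fin.succAbove ⟨r + j.1, by have := j.2; omega⟩))) =
      Matrix.det (Matrix.of fun i j : Fin r =>
          A ⟨i.1, by have := i.2; omega⟩ ⟨j.1, by have := j.2; omega⟩) *
        A.det ^ (m - r) := by
  set s := m + 1 - r with hs
  have hrs : r + s = m + 1 := by omega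
  have hs1 : 1 ≤ s := by omega
  set e : Fin r ⊕ Fin s ≃ Fin (m + 1) := finSumFinEquiv.trans (finCongr hrs) with he
  set B := A.submatrix e e with hB
  have hBdet : B.det = A.det := Matrix.det_submatrix_equiv_self e A
  have hadj : B.adjugate = A.adjugate.submatrix e e := Matrix.adjugate_submatrix_equiv_self e A
  have heinl : ∀ i : Fin r, e (Sum.inl i) = ⟨i.1, by omega⟩ := by
    intro i; ext; simp [he]
  have heinr : ∀ j : Fin s, e (Sum.inr j) = ⟨r + j.1, by have := j.2; omega⟩ := by
    intro j; ext; simp [he]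
  have key := jacobi_main hs1 B
  -- rewrite LHS as transpose of adjugate block
  have hL : (Matrix.of fun i j : Fin (m + 1 - r) =>
        (-1 : R) ^ ((r + i.1) + (r + j.1)) *
          Matrix.det (A.submatrix
            (Fin.succAbove ⟨r + i.1, by have := i.2; omega⟩)
            (Fin.succAbove ⟨r + j.1, by have := j.2; omega⟩)))
      = (Matrix.of fun i j : Fin s => B.adjugate (.inr i) (.inr j))ᵀ := by
    ext i j
    rw [Matrix.transpose_apply, Matrix.of_apply, Matrix.of_apply, hadj,
      Matrix.submatrix_apply, heinr, heinr]
    rw [Matrix.adjugate_fin_succ_eq_det_submatrix]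
  rw [hL, Matrix.det_transpose, key, hBdet, show s - 1 = m - r from by omega]
  congr 1
end

section
/- The bialternant formula for Schur polynomials: for a partition λ = (λ_1 ≥ ... ≥ λ_N ≥ 0) and distinct u_1,...,u_N in an integral domain, s_λ(u_1,...,u_N) · ∏_{1≤i<j≤N}(u_i − u_j) = det[u_j^{N−i+λ_i}]_{i,j=1}^N, where s_λ = det[h_{λ_i+j−i}(u)]_{i,j=1}^N. -/
/-!
Pair polynomials with sequences through `X^k ↦ H k`. Multiplying by `X - x` turns the pairing
with `H` into the pairing with `k ↦ H (k+1) - x H k`, and the recursion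
`h_m(u) = u_0 h_{m-1}(u) + h_m(u_1, …)` makes this, for `H k = h_{a+k}(u)` and `x = u_0`,
the pairing with `k ↦ h_{a+1+k}(u_1, …)`. By induction `k ↦ h_{a+k}(u)` pairs with
`∏_l (X - u_l)` to `1` if `a = -N` and to `0` otherwise (the relation `∑ (-1)^k e_k h_{m-k} = 0`
for `m > 0`), and splitting off `X - u_j` gives that it pairs with `∏_{l ≠ j} (X - u_l)` to
`u_j^{a+N-1}`. So if `B` is the matrix whose `j`-th column lists the coefficients of
`∏_{l ≠ j} (X - u_l)`, then `[h_{λ_i+j-i}] · B = [u_j^{N-1-i+λ_i}]`. The Vandermonde matrix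
times `B` is diagonal with entries `∏_{l ≠ j} (u_j - u_l)`, so `det B = ∏_{i<j} (u_i - u_j)`
once the nonzero Vandermonde determinant is cancelled.
-/

/-- Complete homogeneous symmetric polynomial in `u 0, …, u (N-1)`. -/
def hSym {R : Type*} [CommSemiring R] {N : ℕ} (u : Fin N → R) (j : ℕ) : R :=
  ∑ m : Sym (Fin N) j, (Multiset.map u m.1).prod

/-- Integer-indexed `h`, vanishing in negative degrees. -/
def hZ {R : Type*} [CommSemiring R] {N : ℕ} (u : Fin N → R) (m : ℤ) : R :=
  if 0 ≤ m then hSym u m.toNat else 0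

open Finset Polynomial

namespace MvPolynomial

variable {σ R : Type*} [CommSemiring R] [Fintype σ] [DecidableEq σ]

theorem hsymm_option_succ (n : ℕ) :
    hsymm (Option σ) R (n + 1) =
      X none * hsymm (Option σ) R n + rename some (hsymm σ R (n + 1)) := by
  rw [hsymm, ← Equiv.sum_comp (symOptionSuccEquiv (α := σ) (n := n)).symm,
    Fintype.sum_sum_type, hsymm, hsymm, mul_sum, map_sum]
  congr 1 <;> refine sum_congr rfl fun s _ => ?_
  · simp [symOptionSuccEquiv, Sym.coe_cons]
  · simp [symOptionSuccEquiv, Multiset.map_map, ← Multiset.prod_hom']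

theorem aeval_hsymm {S : Type*} [CommSemiring S] [Algebra R S] (u : σ → S) (n : ℕ) :
    aeval u (hsymm σ R n) = ∑ s : Sym σ n, (s.1.map u).prod := by
  simp [hsymm, map_sum, ← Multiset.prod_hom']

end MvPolynomial

open MvPolynomial in
theorem hSym_eq_aeval {R : Type*} [CommSemiring R] {N : ℕ} (u : Fin N → R) (n : ℕ) :
    hSym u n = aeval u (hsymm (Fin N) R n) := (aeval_hsymm u n).symm

section hZ

variable {R : Type*} [CommSemiring R]

open MvPolynomial in
theorem hSym_succ {N : ℕ} (u : Fin (N + 1) → R) (k : ℕ) :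
    hSym u (k + 1) = u 0 * hSym u k + hSym (u ∘ Fin.succ) (k + 1) := by
  have hopt (k : ℕ) :
      hSym u k = aeval (u ∘ (finSuccEquiv N).symm) (hsymm (Option (Fin N)) R k) := by
    rw [hSym_eq_aeval, ← aeval_rename, rename_hsymm]
  rw [hopt, hopt, hsymm_option_succ, map_add, map_mul, MvPolynomial.aeval_X, aeval_rename,
    hSym_eq_aeval]
  simp [Function.comp_def]

theorem hZ_of_neg {N : ℕ} (u : Fin N → R) {m : ℤ} (hm : m < 0) : hZ u m = 0 :=
  if_neg hm.not_ge

theorem hZ_zero {N : ℕ} (u : Fin N → R) : hZ u 0 = 1 := by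
  simp [hZ, hSym_eq_aeval]

theorem hZ_fin_zero (u : Fin 0 → R) (m : ℤ) : hZ u m = if m = 0 then 1 else 0 := by
  rcases lt_trichotomy m 0 with hm | rfl | hm
  · rw [hZ_of_neg u hm, if_neg hm.ne]
  · rw [hZ_zero, if_pos rfl]
  · obtain ⟨k, rfl⟩ : ∃ k : ℕ, m = k + 1 := ⟨m.toNat - 1, by omega⟩
    rw [if_neg (by omega), hZ, if_pos (by omega), hSym, show ((k : ℤ) + 1).toNat = k + 1 by omega]
    exact Fintype.sum_empty _

theorem hZ_succ {N : ℕ} (u : Fin (N + 1) → R) (m : ℤ) :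
    hZ u m = u 0 * hZ u (m - 1) + hZ (u ∘ Fin.succ) m := by
  rcases lt_trichotomy m 0 with hm | rfl | hm
  · simp [hZ_of_neg _ hm, hZ_of_neg _ (show m - 1 < 0 by omega)]
  · rw [hZ_zero, hZ_zero, hZ_of_neg _ (by omega), mul_zero, zero_add]
  · obtain ⟨k, rfl⟩ : ∃ k : ℕ, m = k + 1 := ⟨m.toNat - 1, by omega⟩
    simp only [hZ, if_pos (show (0 : ℤ) ≤ k + 1 by omega), add_sub_cancel_right,
      if_pos (Int.natCast_nonneg k), show ((k : ℤ) + 1).toNat = k + 1 by omega, Int.toNat_natCast]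
    exact hSym_succ u k

end hZ

namespace Polynomial

section CommSemiring

variable {R : Type*} [CommSemiring R]

noncomputable def coeffPairing (H : ℕ → R) : R[X] →ₗ[R] R :=
  lsum fun k => H k • LinearMap.id

theorem coeffPairing_apply (H : ℕ → R) (p : R[X]) :
    coeffPairing H p = p.sum fun k c => H k * c := rfl

theorem coeffPairing_monomial (H : ℕ → R) (n : ℕ) (c : R) :
    coeffPairing H (monomial n c) = H n * c := by
  rw [coeffPairing_apply, sum_monomial_index _ _ (by simp)]

theorem coeffPairing_one (H : ℕ → R) : coeffPairing H 1 = H 0 := by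
  rw [← monomial_zero_one, coeffPairing_monomial, mul_one]

theorem coeffPairing_X_mul (H : ℕ → R) (p : R[X]) :
    coeffPairing H (X * p) = coeffPairing (fun k => H (k + 1)) p := by
  induction p using Polynomial.induction_on' with
  | add p q hp hq => rw [mul_add, map_add, map_add, hp, hq]
  | monomial n c => rw [X_mul_monomial, coeffPairing_monomial, coeffPairing_monomial]

theorem coeffPairing_eq_zero {H : ℕ → R} {p : R[X]} (hH : ∀ k ≤ p.natDegree, H k = 0) :
    coeffPairing H p = 0 := by
  rw [coeffPairing_apply]
  exact sum_eq_zero fun k hk => by simp only [hH k (le_natDegree_of_mem_supp k hk), zero_mul]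

theorem coeffPairing_eq_sum_fin (H : ℕ → R) {p : R[X]} {N : ℕ} (hp : p.natDegree < N) :
    coeffPairing H p = ∑ k : Fin N, H k * p.coeff k := by
  rw [coeffPairing_apply, sum_over_range' _ (by simp) N hp, ← Fin.sum_univ_eq_sum_range]

end CommSemiring

section CommRing

variable {R : Type*} [CommRing R]

theorem coeffPairing_sub_mul (G H : ℕ → R) (x : R) (p : R[X]) :
    coeffPairing (fun k => G k - x * H k) p = coeffPairing G p - x * coeffPairing H p := by
  simp only [coeffPairing_apply, sum_def, sub_mul, sum_sub_distrib, mul_sum, mul_assoc]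

theorem coeffPairing_X_sub_C_mul (H : ℕ → R) (x : R) (p : R[X]) :
    coeffPairing H ((X - C x) * p) =
      coeffPairing (fun k => H (k + 1)) p - x * coeffPairing H p := by
  rw [sub_mul, map_sub, coeffPairing_X_mul, C_mul', map_smul, smul_eq_mul]

end CommRing

end Polynomial

open Polynomial Lagrange

theorem Lagrange.natDegree_nodal_le {R ι : Type*} [CommRing R] (s : Finset ι) (v : ι → R) :
    (nodal s v).natDegree ≤ #s :=
  (natDegree_prod_le _ _).trans ((sum_le_sum fun i _ => natDegree_X_sub_C_le (v i)).trans (by simp))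

section bialternant

variable {R : Type*} [CommRing R] {N : ℕ}

theorem coeffPairing_hZ_nodal (u : Fin N → R) (a : ℤ) :
    coeffPairing (fun k => hZ u (a + k)) (nodal univ u) = if a + N = 0 then 1 else 0 := by
  induction N generalizing a with
  | zero => simp [nodal, coeffPairing_one, hZ_fin_zero]
  | succ N ih =>
    have hrec : (fun k : ℕ => hZ u (a + (k + 1 : ℕ)) - u 0 * hZ u (a + k)) =
        fun k : ℕ => hZ (u ∘ Fin.succ) (a + 1 + k) := by
      funext k
      rw [hZ_succ u (a + (k + 1 : ℕ)), show a + (k + 1 : ℕ) - 1 = a + k by push_cast; ring,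
        add_sub_cancel_left, show a + (k + 1 : ℕ) = a + 1 + k by push_cast; ring]
    rw [nodal, Fin.prod_univ_succ, coeffPairing_X_sub_C_mul, ← coeffPairing_sub_mul, hrec]
    simpa [nodal, add_assoc, add_comm (1 : ℤ)] using ih (u ∘ Fin.succ) (a + 1)

theorem coeffPairing_hZ_nodal_erase (u : Fin N → R) (j : Fin N) (m : ℕ) :
    coeffPairing (fun k => hZ u (m + 1 - N + k)) (nodal (univ.erase j) u) = u j ^ m := by
  set K : ℤ → R := fun a => coeffPairing (fun k => hZ u (a + k)) (nodal (univ.erase j) u)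
  have hstep (a : ℤ) : K (a + 1) = u j * K a + if a + N = 0 then 1 else 0 := by
    rw [← coeffPairing_hZ_nodal u a, nodal_eq_mul_nodal_erase (mem_univ j),
      coeffPairing_X_sub_C_mul]
    simp only [K, Nat.cast_succ, add_assoc, add_comm (1 : ℤ)]
    ring
  have hvanish : K (-N) = 0 := by
    have hdeg := natDegree_nodal_le (univ.erase j) u
    rw [card_erase_of_mem (mem_univ j), card_univ, Fintype.card_fin] at hdeg
    refine coeffPairing_eq_zero fun k hk => hZ_of_neg u ?_
    have := j.pos
    omega
  show K (m + 1 - N) = u j ^ m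
  induction m with
  | zero => simpa [hvanish, neg_add_eq_sub] using hstep (-N)
  | succ m ih =>
    rw [show ((m + 1 : ℕ) : ℤ) + 1 - N = (m + 1 - N) + 1 by push_cast; ring, hstep, ih,
      if_neg (by omega), add_zero, pow_succ']

theorem natDegree_nodal_erase_lt (u : Fin N → R) (j : Fin N) :
    (nodal (univ.erase j) u).natDegree < N := by
  have := natDegree_nodal_le (univ.erase j) u
  rw [card_erase_of_mem (mem_univ j), card_univ, Fintype.card_fin] at this
  have := j.pos
  omega

noncomputable def nodalCoeffMatrix (u : Fin N → R) : Matrix (Fin N) (Fin N) R :=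
  Matrix.of fun k j => (nodal (univ.erase j) u).coeff k

theorem hZ_mul_nodalCoeffMatrix (u : Fin N → R) (lam : ℕ → ℕ) :
    Matrix.of (fun i j : Fin N => hZ u ((lam i.1 : ℤ) + j.1 - i.1)) * nodalCoeffMatrix u =
      Matrix.of fun i j : Fin N => u j ^ (N - 1 - i.1 + lam i.1) := by
  ext i j
  rw [Matrix.mul_apply, Matrix.of_apply, ← coeffPairing_hZ_nodal_erase u j,
    coeffPairing_eq_sum_fin _ (natDegree_nodal_erase_lt u j)]
  refine sum_congr rfl fun k _ => ?_
  have := i.isLt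
  simp only [Matrix.of_apply, nodalCoeffMatrix]
  congr 2
  omega

theorem vandermonde_mul_nodalCoeffMatrix (u : Fin N → R) :
    Matrix.vandermonde u * nodalCoeffMatrix u =
      Matrix.diagonal fun j => ∏ l ∈ univ.erase j, (u j - u l) := by
  ext i j
  have heval := eval_eq_sum_range' (natDegree_nodal_erase_lt u j) (u i)
  rw [← Fin.sum_univ_eq_sum_range, eval_nodal] at heval
  rw [Matrix.mul_apply, Matrix.diagonal_apply]
  simp only [Matrix.vandermonde_apply, nodalCoeffMatrix, Matrix.of_apply, mul_comm (u i ^ _),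
    ← heval]
  split_ifs with hij
  · rw [hij]
  · exact prod_eq_zero (mem_erase.2 ⟨hij, mem_univ i⟩) (sub_self _)

theorem prod_prod_erase_sub (u : Fin N → R) :
    ∏ j, ∏ l ∈ univ.erase j, (u j - u l) =
      (∏ i, ∏ j ∈ Ioi i, (u j - u i)) * ∏ i, ∏ j ∈ Ioi i, (u i - u j) := by
  simp_rw [← compl_singleton, ← prod_prod_Ioi_mul_eq_prod_prod_off_diag fun a b => u b - u a,
    prod_mul_distrib, mul_comm]

theorem det_nodalCoeffMatrix [IsDomain R] {u : Fin N → R} (hu : Function.Injective u) :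
    (nodalCoeffMatrix u).det = ∏ i, ∏ j ∈ Ioi i, (u i - u j) := by
  refine mul_left_cancel₀ (Matrix.det_vandermonde_ne_zero_iff.2 hu) ?_
  rw [← Matrix.det_mul, vandermonde_mul_nodalCoeffMatrix, Matrix.det_diagonal,
    prod_prod_erase_sub, Matrix.det_vandermonde]

end bialternant

theorem stmt13_general {R : Type*} [CommRing R] [IsDomain R] (N : ℕ) (u : Fin N → R)
    (hu : Function.Injective u) (lam : ℕ → ℕ) :
    Matrix.det (Matrix.of fun i j : Fin N => hZ u ((lam i.1 : ℤ) + j.1 - i.1)) *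
        (∏ i : Fin N, ∏ j ∈ Finset.Ioi i, (u i - u j)) =
      Matrix.det (Matrix.of fun i j : Fin N => u j ^ (N - 1 - i.1 + lam i.1)) := by
  rw [← det_nodalCoeffMatrix hu, ← Matrix.det_mul, hZ_mul_nodalCoeffMatrix]

/-- The bialternant formula for Schur polynomials: for a partition
`λ = (λ_1 ≥ … ≥ λ_N ≥ 0)` (an antitone `lam : ℕ → ℕ` of length `≤ N`, zero-based) and
distinct `u_1, …, u_N` in an integral domain,
`s_λ(u) · ∏_{i<j}(u_i − u_j) = det[u_j^{N−i+λ_i}]`, where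
`s_λ = det[h_{λ_i+j−i}(u)]`. -/
theorem stmt13 {R : Type*} [CommRing R] [IsDomain R] (N : ℕ) (u : Fin N → R)
    (hu : Function.Injective u) (lam : ℕ → ℕ) (hanti : Antitone lam)
    (hlen : ∀ i, N ≤ i → lam i = 0) :
    Matrix.det (Matrix.of fun i j : Fin N => hZ u ((lam i.1 : ℤ) + j.1 - i.1)) *
        (∏ i : Fin N, ∏ j ∈ Finset.Ioi i, (u i - u j)) =
      Matrix.det (Matrix.of fun i j : Fin N => u j ^ (N - 1 - i.1 + lam i.1)) :=
  stmt13_general N u hu lam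
end
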